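/- arXiv:1704.00232 — 5 statements merged into one kernel-verified Lean document; each statement's English description precedes it below -/
import Mathlib

section
/- Let p be an odd prime and X a finite set with |X| = p². Let G be a transitive subgroup of Sym(X). If there exists a regular subgroup of Sym(X) which is cyclic of order p² and is normalized by G, then there exists no regular subgroup of Sym(X) isomorphic to (ℤ/pℤ) × (ℤ/pℤ) normalized by G. (Group-theoretic form, via the Greither–Pareigis correspondence, of: a separable field extension of degree p², p an odd prime, has at most one type of Hopf Galois structures, either cyclic or C_p × C_p.) -/
/-!
Take a Sylow `p`-subgroup `P` of `G`; as `|X| = p²`, it is still transitive. Fix `x ∈ X`, a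
generator `n` of the cyclic regular subgroup `N`, and `u ∈ P` with `u x = n x`.

Conjugation by `u` acts on the regular subgroup `M ≅ 𝔽_p²` through a linear map `L` of `p`-power
order, so `(L - 1)² = 0` and, `p` being odd, `1 + L + ⋯ + L^(p-1) = (L - 1)^(p-1) = 0`. Identifying
`X` with `M`, `u` acts as the affine map `v ↦ L v + a`, so `u^p` is the translation by
`(1 + L + ⋯ + L^(p-1)) a = 0`, i.e. `u^p = 1`.

On the other hand `u` acts on `N` by `n ↦ n^k`, so `u^p x = n^(1 + k + ⋯ + k^(p-1)) x`, and for
odd `p` the sum `1 + k + ⋯ + k^(p-1)` is never divisible by `p²`; hence `u^p ≠ 1`.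
-/

/-- A subgroup `N` of the symmetric group on `X` is *regular* if it acts simply
transitively on `X`, i.e. it is transitive and `|N| = |X|`. -/
def IsRegularSubgroup {X : Type*} (N : Subgroup (Equiv.Perm X)) : Prop :=
  (∀ x y : X, ∃ n ∈ N, n x = y) ∧ Nat.card ↥N = Nat.card X

open Equiv MulAction Finset Polynomial Module Multiplicative

theorem geom_sum_eq_sub_one_pow_of_charP {p : ℕ} [Fact p.Prime] (K : Type*) {A : Type*}
    [CommRing K] [IsDomain K] [CharP K p] [Ring A] [Algebra K A] (x : A) :
    ∑ i ∈ range p, x ^ i = (x - 1) ^ (p - 1) := by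
  have hX : ∑ i ∈ range p, (X : K[X]) ^ i = (X - 1) ^ (p - 1) := by
    refine mul_right_cancel₀ (X_sub_C_ne_zero (1 : K)) ?_
    rw [C_1, geom_sum_mul, ← pow_succ, Nat.sub_add_cancel (Fact.out : p.Prime).one_le,
      sub_pow_char, one_pow]
  simpa using congrArg (aeval x) hX

theorem Module.End.geom_sum_eq_zero_of_pow_eq_one {p r : ℕ} [Fact p.Prime] (hodd : Odd p)
    {K V : Type*} [Field K] [CharP K p] [AddCommGroup V] [Module K V] [FiniteDimensional K V]
    (hV : finrank K V ≤ 2) {L : Module.End K V} (hL : L ^ p ^ r = 1) :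
    ∑ i ∈ range p, L ^ i = 0 := by
  have hnil : IsNilpotent (L - 1) := by
    refine ⟨p ^ r, ?_⟩
    have := congrArg (aeval L) (sub_pow_char_pow (X : K[X]) 1 r)
    simpa [hL] using this
  have hsq : (L - 1) ^ 2 = 0 := by
    refine pow_eq_zero_of_le hV ?_
    simpa [hnil.charpoly_eq_X_pow_finrank] using (L - 1).aeval_self_charpoly
  have hp : 2 ≤ p - 1 := by
    obtain ⟨k, rfl⟩ := hodd
    have := (Fact.out : (2 * k + 1).Prime).two_le
    omega
  rw [geom_sum_eq_sub_one_pow_of_charP K, pow_eq_zero_of_le hp hsq]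

theorem not_sq_dvd_geom_sum_of_odd_prime {p : ℕ} (hp : p.Prime) (hodd : Odd p) (k : ℤ) :
    ¬ (p : ℤ) ^ 2 ∣ ∑ i ∈ range p, k ^ i := by
  have := Fact.mk hp
  intro h
  -- in `ZMod p`, `(∑ kⁱ) (k - 1) = k ^ p - 1 = k - 1`
  obtain ⟨t, ht⟩ : (p : ℤ) ∣ k - 1 := by
    have h0 : ((∑ i ∈ range p, k ^ i : ℤ) : ZMod p) = 0 :=
      (ZMod.intCast_zmod_eq_zero_iff_dvd _ _).mpr ((dvd_pow_self _ two_ne_zero).trans h)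
    rw [← ZMod.intCast_zmod_eq_zero_iff_dvd]
    have := geom_sum_mul (k : ZMod p) p
    push_cast at h0 ⊢
    rwa [h0, zero_mul, ZMod.pow_card, eq_comm] at this
  -- writing `k = 1 + p t`, the sum is `p` modulo `p²`
  have hp2 := odd_sq_dvd_geom_sum₂_sub 1 t hodd
  rw [← sub_eq_iff_eq_add'.mp ht] at hp2
  have : (p : ℤ) ^ 2 ∣ p := by simpa using dvd_sub h hp2
  have : p ^ 2 ∣ p ^ 1 := by rw [pow_one]; exact_mod_cast this
  exact absurd ((Nat.pow_dvd_pow_iff_le_right hp.one_lt).mp this) (by norm_num)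

section

variable {X : Type*}

theorem IsRegularSubgroup.eq_one_of_apply_eq_self [Finite X] {N : Subgroup (Perm X)}
    (hN : IsRegularSubgroup N) {a : Perm X} (ha : a ∈ N) {x : X} (hx : a x = x) : a = 1 := by
  have hbij : Function.Bijective (fun n : N => (n : Perm X) x) :=
    (Nat.bijective_iff_surjective_and_card _).mpr
      ⟨fun y => (hN.1 x y).elim fun n hn => ⟨⟨n, hn.1⟩, hn.2⟩, hN.2⟩
  simpa using congrArg Subtype.val (hbij.injective (a₁ := ⟨a, ha⟩) (a₂ := 1) hx)

theorem mem_of_forall_commute_of_transitive [Nonempty X] {M : Subgroup (Perm X)}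
    (hM : ∀ x y : X, ∃ m ∈ M, m x = y) (hcomm : ∀ a ∈ M, ∀ b ∈ M, Commute a b)
    {σ : Perm X} (hσ : ∀ m ∈ M, Commute σ m) : σ ∈ M := by
  obtain ⟨x₀⟩ := ‹Nonempty X›
  obtain ⟨a, ha, hax⟩ := hM x₀ (σ x₀)
  convert ha
  ext x
  obtain ⟨b, hb, rfl⟩ := hM x₀ x
  calc σ (b x₀) = b (σ x₀) := Perm.congr_fun (hσ b hb).eq x₀
    _ = a (b x₀) := by rw [← hax]; exact Perm.congr_fun (hcomm b hb a ha).eq x₀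

theorem pow_mul_eq_of_mul_eq {M A : Type*} [Monoid M] {ι : A → M} {σ : A → A} {g : M}
    (h : ∀ a, g * ι a = ι (σ a) * g) (j : ℕ) (a : A) : g ^ j * ι a = ι (σ^[j] a) * g ^ j := by
  induction j generalizing a with
  | zero => simp
  | succ j ih =>
    rw [pow_succ, mul_assoc, h, ← mul_assoc, ih, mul_assoc, Function.iterate_succ_apply]

theorem pow_smul_eq_of_smul_eq {G A : Type*} [Monoid G] [MulAction G X] [AddCommMonoid A]
    (ι : Multiplicative A →* G) {σ : A → A} {g : G} (h : ∀ a, g * ι (ofAdd a) = ι (ofAdd (σ a)) * g)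
    {x : X} {a : A} (hx : g • x = ι (ofAdd a) • x) (j : ℕ) :
    g ^ j • x = ι (ofAdd (∑ i ∈ range j, σ^[i] a)) • x := by
  induction j with
  | zero => simp
  | succ j ih =>
    rw [pow_succ, mul_smul, hx, smul_smul, pow_mul_eq_of_mul_eq (ι := fun a => ι (ofAdd a)) h,
      mul_smul, ih, smul_smul, ← map_mul, ← ofAdd_add, sum_range_succ, add_comm]

theorem Sylow.isPretransitive_of_card_eq_prime_pow {G : Type*} [Group G] [Finite G]
    [MulAction G X] [IsPretransitive G X] {p n : ℕ} [hp : Fact p.Prime] (P : Sylow p G)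
    (hX : Nat.card X = p ^ n) : IsPretransitive P X := by
  have : Finite X := Nat.finite_of_card_ne_zero (by simp [hX, hp.out.ne_zero])
  obtain ⟨x⟩ : Nonempty X := (Nat.card_pos_iff.mp (by simp [hX, hp.out.pos])).1
  set S := stabilizer G x
  have horbit : (orbit P x).ncard = S.relIndex P := by
    rw [← index_stabilizer]
    rfl
  have hdvd : p ^ n ∣ S.relIndex P * (P : Subgroup G).index := by
    rw [← Subgroup.inf_relIndex_right, Subgroup.relIndex_mul_index inf_le_right,
      ← Subgroup.relIndex_mul_index inf_le_left, index_stabilizer_of_transitive, hX]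
    exact dvd_mul_left _ _
  have hcop : (p ^ n).Coprime (P : Subgroup G).index :=
    Nat.Coprime.pow_left n (hp.out.coprime_iff_not_dvd.mpr P.not_dvd_index)
  have horbit_dvd : p ^ n ∣ (orbit P x).ncard := horbit ▸ hcop.dvd_of_dvd_mul_right hdvd
  rw [isPretransitive_iff_orbit_eq_univ x]
  refine Set.eq_of_subset_of_ncard_le (Set.subset_univ _) ?_
  rw [Set.ncard_univ, hX]
  exact Nat.le_of_dvd ((Set.ncard_pos (Set.toFinite _)).mpr ⟨x, mem_orbit_self x⟩) horbit_dvd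

theorem exists_addMonoidHom_mul_eq {G V : Type*} [Group G] [AddGroup V] {M : Subgroup G}
    (μ : M ≃* Multiplicative V) {g : G} (hg : g ∈ Subgroup.normalizer (M : Set G)) :
    ∃ L : V →+ V, ∀ a, g * μ.symm (ofAdd a) = μ.symm (ofAdd (L a)) * g := by
  refine ⟨AddMonoidHom.toMultiplicative.symm ((μ.toMonoidHom.comp
    (M.normalizerMonoidHom ⟨g, hg⟩).toMonoidHom).comp μ.symm.toMonoidHom), fun a => ?_⟩
  simp

theorem IsRegularSubgroup.pow_prime_eq_one_of_mem_normalizer [Finite X] {p r : ℕ} [Fact p.Prime]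
    (hodd : Odd p) {M : Subgroup (Perm X)} (hM : IsRegularSubgroup M)
    (μ : M ≃* Multiplicative (ZMod p × ZMod p)) {g : Perm X}
    (hg : g ∈ Subgroup.normalizer (M : Set (Perm X))) (hgr : g ^ p ^ r = 1) : g ^ p = 1 := by
  obtain ⟨L₀, hL₀⟩ := exists_addMonoidHom_mul_eq μ hg
  let ι : Multiplicative (ZMod p × ZMod p) →* Perm X := M.subtype.comp μ.symm.toMonoidHom
  let L : Module.End (ZMod p) (ZMod p × ZMod p) := L₀.toZModLinearMap p
  have hL : ∀ a, g * ι (ofAdd a) = ι (ofAdd (L a)) * g := hL₀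
  have hLpow : ∀ j a, g ^ j * ι (ofAdd a) = ι (ofAdd ((L ^ j) a)) * g ^ j := by
    intro j a
    rw [Module.End.coe_pow]
    exact pow_mul_eq_of_mul_eq hL j a
  have hLr : L ^ p ^ r = 1 := by
    refine LinearMap.ext fun a => ?_
    have := hLpow (p ^ r) a
    rw [hgr, one_mul, mul_one] at this
    exact ofAdd.injective ((M.subtype_injective.comp μ.symm.injective) this).symm
  have hsum : ∑ i ∈ range p, L ^ i = 0 :=
    Module.End.geom_sum_eq_zero_of_pow_eq_one hodd (by simp) hLr
  have hLp : L ^ p = 1 := by rw [← sub_eq_zero, ← geom_sum_mul, hsum, zero_mul]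
  have hcomm : ∀ a ∈ M, ∀ b ∈ M, Commute a b := fun a ha b hb => by
    simpa using ((Commute.all (μ ⟨a, ha⟩) (μ ⟨b, hb⟩)).map μ.symm.toMonoidHom).map M.subtype
  have hne : Nonempty X := (Nat.card_pos_iff.mp (hM.2 ▸ Nat.card_pos)).1
  have hgpM : g ^ p ∈ M := by
    refine mem_of_forall_commute_of_transitive hM.1 hcomm fun m hm => ?_
    obtain ⟨a, rfl⟩ : ∃ a, ι (ofAdd a) = m := ⟨toAdd (μ ⟨m, hm⟩), by simp [ι]⟩
    have := hLpow p a
    rwa [hLp, Module.End.one_apply] at this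
  obtain ⟨x₀⟩ := hne
  obtain ⟨m₀, hm₀, hx⟩ := hM.1 x₀ (g x₀)
  have htraj := pow_smul_eq_of_smul_eq ι hL (x := x₀) (a := toAdd (μ ⟨m₀, hm₀⟩))
    (by simp [ι, hx]) p
  simp_rw [← Module.End.coe_pow, ← LinearMap.sum_apply, hsum] at htraj
  exact hM.eq_one_of_apply_eq_self hgpM (by simpa using htraj)

theorem IsRegularSubgroup.pow_prime_apply_ne_self_of_mem_normalizer [Finite X] {p : ℕ}
    (hp : p.Prime) (hodd : Odd p) {n : Perm X} (hN : IsRegularSubgroup (Subgroup.zpowers n))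
    (hn : orderOf n = p ^ 2) {g : Perm X}
    (hg : g ∈ Subgroup.normalizer (Subgroup.zpowers n : Set (Perm X))) {x : X} (hx : g x = n x) :
    (g ^ p) x ≠ x := by
  obtain ⟨k, hk⟩ : ∃ k : ℤ, n ^ k = g * n * g⁻¹ :=
    Subgroup.mem_zpowers_iff.mp ((Subgroup.mem_normalizer_iff.mp hg n).mp (Subgroup.mem_zpowers n))
  have hconj : ∀ m : ℤ, g * n ^ m = n ^ (k * m) * g := fun m => by
    rw [zpow_mul, hk, conj_zpow, inv_mul_cancel_right]
  have htraj := pow_smul_eq_of_smul_eq (zpowersHom (Perm X) n) (σ := (k * ·)) hconj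
    (x := x) (a := 1) (by simpa using hx) p
  simp only [mul_left_iterate_apply_one, zpowersHom_apply, toAdd_ofAdd, Perm.smul_def] at htraj
  intro hfix
  have h1 : n ^ (∑ i ∈ range p, k ^ i) = 1 :=
    hN.eq_one_of_apply_eq_self (zpow_mem (Subgroup.mem_zpowers n) _) (htraj ▸ hfix)
  have h2 := orderOf_dvd_iff_zpow_eq_one.mpr h1
  rw [hn] at h2
  exact not_sq_dvd_geom_sum_of_odd_prime hp hodd k (by exact_mod_cast h2)

end

/-- If a transitive subgroup `G` of `Sym(X)`, `|X| = p²` with `p` an odd prime,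
normalizes a regular cyclic subgroup of order `p²`, then it normalizes no regular
subgroup isomorphic to `(ℤ/pℤ) × (ℤ/pℤ)`. -/
theorem stmt_0 {p : ℕ} (hp : p.Prime) (hodd : Odd p)
    {X : Type*} [Finite X] (hX : Nat.card X = p ^ 2)
    (G : Subgroup (Equiv.Perm X)) (hG : ∀ x y : X, ∃ g ∈ G, g x = y)
    (hcyc : ∃ N : Subgroup (Equiv.Perm X), IsRegularSubgroup N ∧
      IsCyclic ↥N ∧ Nat.card ↥N = p ^ 2 ∧ G ≤ Subgroup.normalizer (N : Set (Equiv.Perm X))) :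
    ¬ ∃ M : Subgroup (Equiv.Perm X), IsRegularSubgroup M ∧
      Nonempty (↥M ≃* Multiplicative (ZMod p × ZMod p)) ∧ G ≤ Subgroup.normalizer (M : Set (Equiv.Perm X)) := by
  have := Fact.mk hp
  rintro ⟨M, hM, ⟨μ⟩, hGM⟩
  obtain ⟨N, hN, hNcyc, hNcard, hGN⟩ := hcyc
  obtain ⟨n, rfl⟩ := (Subgroup.isCyclic_iff_exists_zpowers_eq_top N).mp hNcyc
  have : IsPretransitive G X := ⟨fun x y => (hG x y).elim fun g hg => ⟨⟨g, hg.1⟩, hg.2⟩⟩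
  obtain ⟨P⟩ : Nonempty (Sylow p G) := inferInstance
  have := P.isPretransitive_of_card_eq_prime_pow hX
  obtain ⟨x⟩ : Nonempty X := (Nat.card_pos_iff.mp (by simp [hX, hp.pos])).1
  obtain ⟨⟨⟨u, huG⟩, huP⟩, hux⟩ := exists_smul_eq P x (n x)
  obtain ⟨r, hr⟩ := P.2 ⟨_, huP⟩
  have hup : u ^ p = 1 := hM.pow_prime_eq_one_of_mem_normalizer hodd μ (hGM huG)
    (by simpa using congrArg (fun q : P => ((q : G) : Perm X)) hr)
  exact hN.pow_prime_apply_ne_self_of_mem_normalizer hp hodd (Nat.card_zpowers n ▸ hNcard)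
    (hGN huG) hux (by rw [hup]; rfl)
end

section
/- Let p be an odd prime. The normalizer in Sym((ℤ/pℤ) × (ℤ/pℤ)) of the image of the left regular representation of (ℤ/pℤ) × (ℤ/pℤ) (i.e., the holomorph Hol(C_p × C_p), viewed inside S_{p²}) contains no element of order p². -/
/-!
An element of the holomorph of a group acts as `x ↦ φ x * a` with `φ` an endomorphism; for
`V = 𝔽_p²` this is an affine map `v ↦ f v + a`, which becomes the linear map
`(v, t) ↦ (f v + t • a, t)` of `V × 𝔽_p`, so `Hol(C_p × C_p)` embeds in `GL₃(𝔽_p)`.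
An element `L` of `p`-power order there is unipotent: `(L - 1) ^ 3 = 0` by Cayley–Hamilton.
As `p ≥ 3`, `L ^ p - 1 = (L - 1) ^ p = 0`, so no element has order `p²`.
-/

open Module Polynomial

theorem Subgroup.exists_monoidHom_of_mem_normalizer_range_toPermHom {G : Type*} [Group G]
    {σ : Equiv.Perm G}
    (hσ : σ ∈ Subgroup.normalizer ((MulAction.toPermHom G G).range : Set (Equiv.Perm G))) :
    ∃ φ : G →* G, ∀ x, σ x = φ x * σ 1 := by
  have hconj : ∀ g x, σ (g * x) = σ g * (σ 1)⁻¹ * σ x := by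
    intro g x
    obtain ⟨c, hc⟩ := (Subgroup.mem_normalizer_iff.1 hσ (MulAction.toPermHom G G g)).1 ⟨g, rfl⟩
    have hc' : ∀ y, c * σ y = σ (g * y) := fun y => by simpa using congr($hc (σ y))
    have hcg : σ g = c * σ 1 := by rw [hc', mul_one]
    rw [← hc', hcg, mul_inv_cancel_right]
  refine ⟨MonoidHom.mk' (fun g => σ g * (σ 1)⁻¹) fun g h => ?_, fun x => by simp⟩
  simp only [hconj, mul_assoc]

section

variable {K V : Type*} [Field K] [AddCommGroup V] [Module K V]

theorem Module.End.pow_finrank_eq_zero_of_isNilpotent [FiniteDimensional K V] {L : End K V}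
    (hL : IsNilpotent L) : L ^ finrank K V = 0 := by
  simpa only [hL.charpoly_eq_X_pow_finrank, map_pow, aeval_X] using L.aeval_self_charpoly

theorem Module.End.pow_char_eq_one_of_pow_char_pow_eq_one [FiniteDimensional K V] {p : ℕ}
    [Fact p.Prime] [CharP K p] (hdim : finrank K V ≤ p) {L : End K V} {k : ℕ}
    (hL : L ^ p ^ k = 1) : L ^ p = 1 := by
  have hsub : ∀ n, (L - 1) ^ p ^ n = L ^ p ^ n - 1 := fun n => by
    simpa using congr(aeval L $(sub_pow_char_pow (X : K[X]) 1 n))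
  have hnil : IsNilpotent (L - 1) := ⟨p ^ k, by rw [hsub, hL, sub_self]⟩
  rw [← sub_eq_zero, ← pow_one p, ← hsub 1, pow_one]
  exact pow_eq_zero_of_le hdim (pow_finrank_eq_zero_of_isNilpotent hnil)

def LinearMap.homogenize (f : V →ₗ[K] V) (a : V) : End K (V × K) :=
  (f ∘ₗ LinearMap.fst K V K + LinearMap.toSpanSingleton K V a ∘ₗ LinearMap.snd K V K).prod
    (LinearMap.snd K V K)

variable (f : V →ₗ[K] V) (a : V)

theorem LinearMap.homogenize_apply (v : V) (t : K) : homogenize f a (v, t) = (f v + t • a, t) :=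
  rfl

theorem LinearMap.homogenize_pow_apply (n : ℕ) (v : V) :
    (homogenize f a ^ n) (v, 1) = ((fun w : V => f w + a)^[n] v, 1) := by
  induction n with
  | zero => rfl
  | succ n ih =>
    rw [pow_succ', Module.End.mul_apply, ih, homogenize_apply, one_smul,
      Function.iterate_succ_apply']

theorem LinearMap.homogenize_pow_eq_one_iff (n : ℕ) :
    homogenize f a ^ n = 1 ↔ ∀ v, (fun w : V => f w + a)^[n] v = v := by
  refine ⟨fun h v => ?_, fun h => ?_⟩
  · simpa [h] using (congrArg Prod.fst (homogenize_pow_apply f a n v)).symm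
  have hfix : ∀ v, (homogenize f a ^ n) (v, 1) = (v, 1) := by simp [homogenize_pow_apply, h]
  apply LinearMap.prod_ext
  · refine LinearMap.ext fun v => ?_
    have hv : ((v, 0) : V × K) = (v, 1) - (0, 1) := by simp
    simp only [LinearMap.comp_apply, LinearMap.inl_apply, hv, map_sub, hfix, Module.End.one_apply]
  · exact LinearMap.ext_ring (by simpa using hfix 0)

variable {f a} in
theorem Equiv.Perm.pow_char_eq_one_of_affine [FiniteDimensional K V] {p : ℕ} [Fact p.Prime]
    [CharP K p] (hdim : finrank K V < p) {σ : Equiv.Perm V} (hσ : ∀ v, σ v = f v + a) {k : ℕ}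
    (h : σ ^ p ^ k = 1) : σ ^ p = 1 := by
  have hσ' : ⇑σ = fun w => f w + a := funext hσ
  have hpow : ∀ n, σ ^ n = 1 ↔ LinearMap.homogenize f a ^ n = 1 := fun n => by
    rw [LinearMap.homogenize_pow_eq_one_iff, Equiv.Perm.ext_iff, ← hσ']
    simp only [Equiv.Perm.coe_pow, Equiv.Perm.one_apply]
  rw [hpow] at h ⊢
  refine Module.End.pow_char_eq_one_of_pow_char_pow_eq_one ?_ h
  rw [finrank_prod, finrank_self]
  exact hdim

end

/-- (Kohl) For `p` an odd prime, the holomorph of `C_p × C_p` — the normalizer in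
`Sym((ℤ/pℤ) × (ℤ/pℤ))` of the image of the left regular representation of
`(ℤ/pℤ) × (ℤ/pℤ)` — contains no element of order `p²`. -/
theorem stmt_8 {p : ℕ} (hp : p.Prime) (hodd : Odd p) :
    ∀ σ ∈ Subgroup.normalizer
      ((MulAction.toPermHom (Multiplicative (ZMod p × ZMod p))
        (Multiplicative (ZMod p × ZMod p))).range : Set (Equiv.Perm (Multiplicative (ZMod p × ZMod p)))),
      orderOf σ ≠ p ^ 2 := by
  intro σ hσ hord
  have : Fact p.Prime := ⟨hp⟩
  obtain ⟨φ, hφ⟩ := Subgroup.exists_monoidHom_of_mem_normalizer_range_toPermHom hσ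
  set τ := Equiv.permCongrHom Multiplicative.toAdd σ
  have hτ : ∀ v, τ v = (AddMonoidHom.toMultiplicative.symm φ).toZModLinearMap p v
      + (σ 1).toAdd := fun v => hφ (.ofAdd v)
  have hτord : orderOf τ = p ^ 2 := (MulEquiv.orderOf_eq _ σ).trans hord
  have hdim : finrank (ZMod p) (ZMod p × ZMod p) < p := by
    obtain ⟨m, rfl⟩ := hodd
    rw [finrank_prod, finrank_self]
    have := hp.two_le
    omega
  have hτp : τ ^ p = 1 :=
    Equiv.Perm.pow_char_eq_one_of_affine hdim hτ (k := 2) (hτord ▸ pow_orderOf_eq_one τ)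
  have hdvd : p ^ 2 ∣ p ^ 1 := by
    rw [pow_one, ← hτord]
    exact orderOf_dvd_of_pow_eq_one hτp
  exact absurd ((Nat.pow_dvd_pow_iff_le_right hp.one_lt).1 hdvd) (by norm_num)
end

section
/- Let p be a prime and G a transitive subgroup of Sym(X) for a set X with |X| = p. Then there exists a regular subgroup of Sym(X) normalized by G if and only if G is solvable; moreover, when G is solvable, such a regular subgroup is unique (it is cyclic of order p). (Group-theoretic form, via the Greither–Pareigis correspondence, of: a separable field extension of prime degree p has a Hopf Galois structure if and only if the Galois group of its Galois closure is solvable, and in this case the Hopf Galois structure is unique.) -/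
open Equiv MulAction Subgroup

theorem Subgroup.isSolvable_normalizer_of_centralizer_le {G : Type*} [Group G] {N : Subgroup G}
    [Group.IsSolvable N] [Group.IsSolvable (MulAut N)] (h : centralizer (N : Set G) ≤ N) :
    Group.IsSolvable (normalizer (N : Set G)) := by
  refine Group.isSolvable_of_ker_le_range (inclusion le_normalizer) N.normalizerMonoidHom ?_
  rw [normalizerMonoidHom_ker, inclusion_range]
  exact subgroupOf_mono _ h

instance IsCyclic.isSolvable_mulAut {C : Type*} [Group C] [IsCyclic C] :
    Group.IsSolvable (MulAut C) :=
  Group.isSolvable_of_surjective (f := (IsCyclic.mulAutMulEquiv C).symm.toMonoidHom)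
    (MulEquiv.surjective _)

theorem Group.exists_normal_isMulCommutative_ne_bot {G : Type*} [Group G] [Group.IsSolvable G]
    [Nontrivial G] : ∃ A : Subgroup G, A.Normal ∧ IsMulCommutative A ∧ A ≠ ⊥ := by
  classical
  have hex : ∃ n, derivedSeries G n = ⊥ := Group.IsSolvable.solvable
  obtain ⟨m, hm⟩ : ∃ m, Nat.find hex = m + 1 := Nat.exists_eq_succ_of_ne_zero fun h0 =>
    top_ne_bot ((derivedSeries_zero G).symm.trans ((Nat.find_eq_zero hex).mp h0))
  refine ⟨derivedSeries G m, derivedSeries_normal G m, ?_, Nat.find_min hex (by omega)⟩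
  rw [← le_centralizer_iff_isMulCommutative, ← commutator_eq_bot_iff_le_centralizer,
    ← derivedSeries_succ, ← hm]
  exact Nat.find_spec hex

section Perm

variable {X : Type*}

theorem Subgroup.isPretransitive_iff_forall_exists_apply_eq {N : Subgroup (Perm X)} :
    IsPretransitive N X ↔ ∀ x y : X, ∃ n ∈ N, n x = y :=
  ⟨fun h x y => by obtain ⟨n, hn⟩ := h.exists_smul_eq x y; exact ⟨n, n.2, hn⟩,
   fun h => ⟨fun x y => by obtain ⟨n, hn, hxy⟩ := h x y; exact ⟨⟨n, hn⟩, hxy⟩⟩⟩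

variable {N : Subgroup (Perm X)}

theorem Subgroup.eq_of_mem_centralizer_of_apply_eq (hN : ∀ x y : X, ∃ n ∈ N, n x = y)
    {c d : Perm X} (hc : c ∈ centralizer (N : Set (Perm X)))
    (hd : d ∈ centralizer (N : Set (Perm X))) {x₀ : X} (h : c x₀ = d x₀) : c = d := by
  ext x
  obtain ⟨n, hn, rfl⟩ := hN x₀ x
  calc c (n x₀) = n (c x₀) := (DFunLike.congr_fun (hc n hn) x₀).symm
    _ = n (d x₀) := by rw [h]
    _ = d (n x₀) := DFunLike.congr_fun (hd n hn) x₀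

theorem Subgroup.centralizer_le_of_isMulCommutative [IsMulCommutative N]
    (hN : ∀ x y : X, ∃ n ∈ N, n x = y) : centralizer (N : Set (Perm X)) ≤ N := by
  intro c hc
  cases isEmpty_or_nonempty X
  · exact Subsingleton.elim 1 c ▸ N.one_mem
  obtain ⟨x₀⟩ := ‹Nonempty X›
  obtain ⟨n, hn, hnc⟩ := hN x₀ (c x₀)
  rwa [eq_of_mem_centralizer_of_apply_eq hN hc (le_centralizer N hn) hnc.symm]

theorem IsRegularSubgroup.of_isMulCommutative [Nonempty X] [IsMulCommutative N]
    (hN : ∀ x y : X, ∃ n ∈ N, n x = y) : IsRegularSubgroup N := by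
  obtain ⟨x₀⟩ := ‹Nonempty X›
  refine ⟨hN, Nat.card_eq_of_bijective (fun n : N => (n : Perm X) x₀)
    ⟨fun m n h => ?_, fun y => ?_⟩⟩
  · exact Subtype.ext (eq_of_mem_centralizer_of_apply_eq hN (le_centralizer N m.2)
      (le_centralizer N n.2) h)
  · obtain ⟨n, hn, rfl⟩ := hN x₀ y
    exact ⟨⟨n, hn⟩, rfl⟩

end Perm

section Sylow

variable {p : ℕ} [Fact p.Prime] {G : Type*} [Group G] [Finite G]

theorem Subgroup.mem_of_normal_of_card_eq_prime {N : Subgroup G} [N.Normal]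
    (hN : Nat.card N = p) (hG : ¬ p ^ 2 ∣ Nat.card G) {g : G} (hg : orderOf g = p) :
    g ∈ N := by
  have hindex : ¬ p ∣ N.index := fun h => hG <| by
    rw [← N.card_mul_index, hN, sq]
    exact mul_dvd_mul_left p h
  let P := (IsPGroup.of_card (hN.trans (pow_one p).symm)).toSylow hindex
  let _ := Sylow.unique_of_normal P ‹N.Normal›
  obtain ⟨Q, hQ⟩ := (IsPGroup.of_card (n := 1)
    (by rw [Nat.card_zpowers, hg, pow_one])).exists_le_sylow (P := zpowers g)
  exact (Subsingleton.elim Q P ▸ hQ) (mem_zpowers g)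

theorem Subgroup.mem_of_mem_normalizer_of_card_eq_prime {N : Subgroup G}
    (hN : Nat.card N = p) (hG : ¬ p ^ 2 ∣ Nat.card G) {g : G}
    (hgN : g ∈ normalizer (N : Set G)) (hg : orderOf g = p) : g ∈ N := by
  have hN' : Nat.card (N.subgroupOf (normalizer (N : Set G))) = p := by
    rw [← hN]; exact Nat.card_congr (subgroupOfEquivOfLe le_normalizer).toEquiv
  have hK : ¬ p ^ 2 ∣ Nat.card (normalizer (N : Set G)) :=
    fun h => hG (h.trans (card_subgroup_dvd_card _))
  exact mem_subgroupOf.mp (mem_of_normal_of_card_eq_prime (N := N.subgroupOf _)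
    hN' hK (g := ⟨g, hgN⟩) (by rwa [orderOf_mk]))

theorem MulAction.exists_orderOf_eq_prime_of_dvd_card {X : Type*} [Nonempty X] [MulAction G X]
    [IsPretransitive G X] (hX : p ∣ Nat.card X) : ∃ g : G, orderOf g = p := by
  obtain ⟨x⟩ := ‹Nonempty X›
  exact exists_prime_orderOf_dvd_card' p
    ((index_stabilizer_of_transitive G x ▸ hX).trans (index_dvd_card _))

end Sylow

theorem Subgroup.fixedPoints_ne_univ_of_ne_bot {G X : Type*} [Group G] [MulAction G X]
    [FaithfulSMul G X] {H : Subgroup G} (hH : H ≠ ⊥) : fixedPoints H X ≠ Set.univ := by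
  refine fun h => hH <| (eq_bot_iff_forall H).mpr fun a ha =>
    eq_of_smul_eq_smul (α := X) fun x => ?_
  have hx : x ∈ fixedPoints H X := h ▸ Set.mem_univ x
  simpa using hx ⟨a, ha⟩

section PrimeDegree

variable {p : ℕ} [Fact p.Prime] {X : Type*} [Finite X]

theorem not_sq_dvd_card_perm (hX : Nat.card X = p) : ¬ p ^ 2 ∣ Nat.card (Perm X) := by
  have hp : p.Prime := Fact.out
  rw [Nat.card_perm, hX, ← Nat.mul_factorial_pred hp.ne_zero, sq,
    Nat.mul_dvd_mul_iff_left hp.pos, hp.dvd_factorial]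
  have := hp.pos
  omega

theorem Subgroup.exists_orderOf_eq_prime_of_card_eq (hX : Nat.card X = p) {G : Subgroup (Perm X)}
    (hG : ∀ x y : X, ∃ g ∈ G, g x = y) : ∃ g : G, orderOf g = p := by
  have : Nonempty X := Nat.card_pos_iff.mp (hX ▸ (Fact.out : p.Prime).pos) |>.1
  have := isPretransitive_iff_forall_exists_apply_eq.mpr hG
  exact MulAction.exists_orderOf_eq_prime_of_dvd_card (X := X) hX.symm.dvd

theorem IsRegularSubgroup.eq_zpowers_of_mem_normalizer (hX : Nat.card X = p)
    {N : Subgroup (Perm X)} (hN : IsRegularSubgroup N) {g : Perm X}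
    (hgN : g ∈ normalizer (N : Set (Perm X))) (hg : orderOf g = p) : N = zpowers g := by
  have hcard : Nat.card N = p := hN.2.trans hX
  have hg' : g ∈ N :=
    mem_of_mem_normalizer_of_card_eq_prime hcard (not_sq_dvd_card_perm hX) hgN hg
  exact (eq_of_le_of_card_ge (zpowers_le.mpr hg') (by rw [hcard, Nat.card_zpowers, hg])).symm

theorem IsRegularSubgroup.eq_of_le_normalizer (hX : Nat.card X = p)
    {G N₁ N₂ : Subgroup (Perm X)} (hG : ∀ x y : X, ∃ g ∈ G, g x = y)
    (hN₁ : IsRegularSubgroup N₁) (hGN₁ : G ≤ normalizer (N₁ : Set (Perm X)))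
    (hN₂ : IsRegularSubgroup N₂) (hGN₂ : G ≤ normalizer (N₂ : Set (Perm X))) :
    N₁ = N₂ := by
  obtain ⟨g, hg⟩ := exists_orderOf_eq_prime_of_card_eq hX hG
  rw [← orderOf_coe] at hg
  rw [hN₁.eq_zpowers_of_mem_normalizer hX (hGN₁ g.2) hg,
    hN₂.eq_zpowers_of_mem_normalizer hX (hGN₂ g.2) hg]

theorem IsRegularSubgroup.isSolvable_normalizer (hX : Nat.card X = p) {N : Subgroup (Perm X)}
    (hN : IsRegularSubgroup N) : Group.IsSolvable (normalizer (N : Set (Perm X))) := by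
  have : IsCyclic N := isCyclic_of_prime_card (hN.2.trans hX)
  exact isSolvable_normalizer_of_centralizer_le (centralizer_le_of_isMulCommutative hN.1)

theorem exists_isRegularSubgroup_le_normalizer (hX : Nat.card X = p) {G : Subgroup (Perm X)}
    (hG : ∀ x y : X, ∃ g ∈ G, g x = y) [Group.IsSolvable G] :
    ∃ N : Subgroup (Perm X), IsRegularSubgroup N ∧ G ≤ normalizer (N : Set (Perm X)) := by
  have : Nonempty X := Nat.card_pos_iff.mp (hX ▸ (Fact.out : p.Prime).pos) |>.1
  have : IsPretransitive G X := isPretransitive_iff_forall_exists_apply_eq.mpr hG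
  have : Nontrivial G := by
    obtain ⟨g, hg⟩ := exists_orderOf_eq_prime_of_card_eq hX hG
    exact nontrivial_of_ne g 1 fun h =>
      (Fact.out : p.Prime).one_lt.ne' (by rw [← hg, h, orderOf_one])
  obtain ⟨A, hA, hAcomm, hAbot⟩ := Group.exists_normal_isMulCommutative_ne_bot (G := G)
  have : IsPreprimitive G X := .of_prime_card (hX ▸ Fact.out)
  have hAX : IsPretransitive A X :=
    IsQuasiPreprimitive.isPretransitive_of_normal (fixedPoints_ne_univ_of_ne_bot hAbot)
  refine ⟨A.map G.subtype, IsRegularSubgroup.of_isMulCommutative fun x y => ?_, ?_⟩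
  · obtain ⟨a, ha⟩ := hAX.exists_smul_eq x y
    exact ⟨a, mem_map_of_mem _ a.2, ha⟩
  · calc G = (normalizer (A : Set G)).map G.subtype := by
          rw [normalizer_eq_top, ← MonoidHom.range_eq_map, range_subtype]
      _ ≤ normalizer (A.map G.subtype : Set (Perm X)) := le_normalizer_map _

end PrimeDegree

/-- Let `p` be a prime and `G` a transitive subgroup of `Sym(X)` with `|X| = p`.
There is a regular subgroup of `Sym(X)` normalized by `G` iff `G` is solvable;
moreover when `G` is solvable such a regular subgroup is unique and is cyclic
of order `p`. -/
theorem stmt_11 {p : ℕ} (hp : p.Prime) {X : Type*} [Finite X]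
    (hX : Nat.card X = p)
    (G : Subgroup (Equiv.Perm X)) (hG : ∀ x y : X, ∃ g ∈ G, g x = y) :
    ((∃ N : Subgroup (Equiv.Perm X), IsRegularSubgroup N ∧ G ≤ Subgroup.normalizer (N : Set (Equiv.Perm X))) ↔
      IsSolvable ↥G) ∧
    (IsSolvable ↥G →
      (∀ N₁ N₂ : Subgroup (Equiv.Perm X),
        IsRegularSubgroup N₁ → G ≤ Subgroup.normalizer (N₁ : Set (Equiv.Perm X)) →
        IsRegularSubgroup N₂ → G ≤ Subgroup.normalizer (N₂ : Set (Equiv.Perm X)) → N₁ = N₂) ∧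
      (∀ N : Subgroup (Equiv.Perm X), IsRegularSubgroup N → G ≤ Subgroup.normalizer (N : Set (Equiv.Perm X)) →
        IsCyclic ↥N ∧ Nat.card ↥N = p)) := by
  have : Fact p.Prime := ⟨hp⟩
  refine ⟨⟨?_, ?_⟩, fun _ => ⟨?_, ?_⟩⟩
  · rintro ⟨N, hN, hGN⟩
    have := hN.isSolvable_normalizer hX
    exact Group.isSolvable_of_isSolvable_injective (inclusion_injective hGN)
  · intro hsolv
    have : Group.IsSolvable G := hsolv
    exact exists_isRegularSubgroup_le_normalizer hX hG
  · exact fun _ _ => IsRegularSubgroup.eq_of_le_normalizer hX hG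
  · exact fun N hN _ => ⟨isCyclic_of_prime_card (hN.2.trans hX), hN.2.trans hX⟩
end

section
/- Let V = (ℤ/2ℤ) × (ℤ/2ℤ) and let G ≤ Sym(V) be the image of the left regular representation of V. Then there are exactly 4 regular subgroups of Sym(V) normalized by G: exactly 3 cyclic of order 4 and exactly one isomorphic to V (namely G itself). (Hence a Galois extension of degree 4 with Galois group C₂×C₂ has exactly 4 Hopf Galois structures: 3 of type C₄ and 1 of type C₂×C₂.) -/
/-- The Klein four group `V = (ℤ/2ℤ) × (ℤ/2ℤ)` (written multiplicatively). -/
abbrev V13 := Multiplicative (ZMod 2 × ZMod 2)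

/-- The image of the left regular representation of `V` in `Sym(V)`. -/
def G13 : Subgroup (Equiv.Perm V13) := (MulAction.toPermHom V13 V13).range


/-! A regular subgroup `N ≤ Sym(V)` acts freely, so it consists of `1` and the three
permutations `a, b, c ∈ N` sending `1` to the three other points of `V`. Closure of
`{1, a, b, c}` under multiplication is a finite check, which leaves exactly the cyclic groups
generated by the three 4-cycles of `Sym(V)` (one per pair of mutually inverse 4-cycles) and the
left regular image `G`. Each of these four is normalized by `G`. The three cyclic ones are not
isomorphic to `V`, which has exponent 2, while `G ≅ V`. -/

open Equiv Subgroup Multiplicative Finset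

theorem Nat.card_subtype_eq_ncard {α : Type*} {p : α → Prop} {s : Set α}
    (h : ∀ a, p a ↔ a ∈ s) : Nat.card {a // p a} = s.ncard := by
  rw [← Nat.card_coe_set_eq]
  exact Nat.card_congr (Equiv.subtypeEquivRight h)

theorem not_isCyclic_of_forall_sq_eq_one {G : Type*} [Group G] (hsq : ∀ g : G, g ^ 2 = 1)
    (hcard : 2 < Nat.card G) : ¬IsCyclic G := by
  intro hG
  have hdvd : Nat.card G ∣ 2 :=
    IsCyclic.exponent_eq_card (α := G) ▸ Monoid.exponent_dvd_of_forall_pow_eq_one hsq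
  have := Nat.le_of_dvd two_pos hdvd
  omega

namespace IsRegularSubgroup

variable {X : Type*} {N : Subgroup (Perm X)}

theorem bijective_apply [Finite X] (hN : IsRegularSubgroup N) (x : X) :
    Function.Bijective fun n : N ↦ (n : Perm X) x :=
  (Nat.bijective_iff_surjective_and_card _).2
    ⟨fun y ↦ let ⟨n, hn, hny⟩ := hN.1 x y; ⟨⟨n, hn⟩, hny⟩, hN.2⟩

theorem eq_of_apply_eq [Finite X] (hN : IsRegularSubgroup N) {g h : Perm X} (hg : g ∈ N)
    (hh : h ∈ N) {x : X} (hx : g x = h x) : g = h :=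
  congrArg Subtype.val <| (hN.bijective_apply x).1 (a₁ := ⟨g, hg⟩) (a₂ := ⟨h, hh⟩) hx

theorem mem_iff_of_subset [Finite X] (hN : IsRegularSubgroup N) {s : Set (Perm X)}
    (hsN : s ⊆ N) {x : X} (hs : ∀ y, ∃ g ∈ s, g x = y) {g : Perm X} : g ∈ N ↔ g ∈ s := by
  refine ⟨fun hg ↦ ?_, fun hg ↦ hsN hg⟩
  obtain ⟨h, hh, hhx⟩ := hs (g x)
  rwa [hN.eq_of_apply_eq hg (hsN hh) hhx.symm]

end IsRegularSubgroup

theorem isRegularSubgroup_of_mem_iff {X : Type*} [Fintype X] {N : Subgroup (Perm X)}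
    {s : Finset (Perm X)} (hs : ∀ g, g ∈ N ↔ g ∈ s) (htrans : ∀ x y : X, ∃ g ∈ s, g x = y)
    (hcard : s.card = Fintype.card X) : IsRegularSubgroup N := by
  refine ⟨fun x y ↦ ?_, ?_⟩
  · obtain ⟨g, hg, hgy⟩ := htrans x y
    exact ⟨g, (hs g).2 hg, hgy⟩
  · rw [Nat.card_congr (Equiv.subtypeEquivRight hs), Nat.card_eq_fintype_card,
      Fintype.card_coe, hcard, Nat.card_eq_fintype_card]

namespace KleinFour

-- One 4-cycle from each pair `σ, σ⁻¹`.
def fourCycle : Fin 3 → Perm V13 :=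
  ![[1, ofAdd (0, 1), ofAdd (1, 0), ofAdd (1, 1)].formPerm,
    [1, ofAdd (0, 1), ofAdd (1, 1), ofAdd (1, 0)].formPerm,
    [1, ofAdd (1, 0), ofAdd (0, 1), ofAdd (1, 1)].formPerm]

theorem orderOf_fourCycle (i : Fin 3) : orderOf (fourCycle i) = 4 :=
  orderOf_eq_prime_pow (p := 2) (n := 1) (by revert i; decide) (by revert i; decide)

theorem mem_zpowers_fourCycle_iff {i : Fin 3} {g : Perm V13} :
    g ∈ zpowers (fourCycle i) ↔ g ∈ (range 4).image (fourCycle i ^ ·) := by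
  rw [(isOfFinOrder_of_finite _).mem_zpowers_iff_mem_range_orderOf, orderOf_fourCycle]

theorem zpowers_fourCycle_injective : Function.Injective fun i ↦ zpowers (fourCycle i) := by
  intro i j hij
  have hj :=
    mem_zpowers_fourCycle_iff.1 ((SetLike.ext_iff.1 hij (fourCycle j)).2 (mem_zpowers _))
  clear hij
  revert i j
  decide

theorem mem_G13_iff {g : Perm V13} :
    g ∈ G13 ↔ g ∈ univ.image (MulAction.toPerm : V13 → Perm V13) := by
  simp [G13]

set_option maxRecDepth 20000 in
set_option synthInstance.maxSize 2048 in
theorem mulClosed_quadruple_eq : ∀ a b c : Perm V13,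
    a 1 = ofAdd (0, 1) → b 1 = ofAdd (1, 0) → c 1 = ofAdd (1, 1) →
    (∀ p ∈ ({1, a, b, c} : Finset (Perm V13)), ∀ q ∈ ({1, a, b, c} : Finset (Perm V13)),
      p * q ∈ ({1, a, b, c} : Finset (Perm V13))) →
    (∃ i, ({1, a, b, c} : Finset (Perm V13)) = (range 4).image (fourCycle i ^ ·)) ∨
      ({1, a, b, c} : Finset (Perm V13)) = univ.image (MulAction.toPerm : V13 → Perm V13) := by
  decide

theorem isRegularSubgroup_iff {N : Subgroup (Perm V13)} :
    IsRegularSubgroup N ↔ N ∈ insert G13 (Set.range fun i ↦ zpowers (fourCycle i)) := by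
  constructor
  · intro hN
    obtain ⟨a, ha, ha1⟩ := hN.1 1 (ofAdd (0, 1))
    obtain ⟨b, hb, hb1⟩ := hN.1 1 (ofAdd (1, 0))
    obtain ⟨c, hc, hc1⟩ := hN.1 1 (ofAdd (1, 1))
    have hmem : ∀ g, g ∈ N ↔ g ∈ ({1, a, b, c} : Finset (Perm V13)) := by
      intro g
      refine (hN.mem_iff_of_subset (x := 1) ?_ fun y ↦ ?_).trans Finset.mem_coe
      · intro g hg
        simp only [coe_insert, coe_singleton, Set.mem_insert_iff, Set.mem_singleton_iff] at hg
        rcases hg with rfl | rfl | rfl | rfl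
        exacts [N.one_mem, ha, hb, hc]
      · have hy : y = 1 ∨ y = ofAdd (0, 1) ∨ y = ofAdd (1, 0) ∨ y = ofAdd (1, 1) := by
          revert y; decide
        rcases hy with rfl | rfl | rfl | rfl
        exacts [⟨1, by simp, rfl⟩, ⟨a, by simp, ha1⟩, ⟨b, by simp, hb1⟩, ⟨c, by simp, hc1⟩]
    have hclosed := fun p hp q hq ↦ (hmem _).1 (N.mul_mem ((hmem p).2 hp) ((hmem q).2 hq))
    rcases mulClosed_quadruple_eq a b c ha1 hb1 hc1 hclosed with ⟨i, hi⟩ | hG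
    · exact Or.inr ⟨i, SetLike.ext fun g ↦ by rw [hmem, hi, mem_zpowers_fourCycle_iff]⟩
    · exact Or.inl (SetLike.ext fun g ↦ by rw [hmem, hG, mem_G13_iff])
  · rintro (rfl | ⟨i, rfl⟩)
    · exact isRegularSubgroup_of_mem_iff (fun _ ↦ mem_G13_iff) (by decide) (by decide)
    · exact isRegularSubgroup_of_mem_iff (fun _ ↦ mem_zpowers_fourCycle_iff)
        (by revert i; decide) (by revert i; decide)

set_option synthInstance.maxSize 2048 in
theorem le_normalizer_zpowers_fourCycle (i : Fin 3) :
    G13 ≤ normalizer (zpowers (fourCycle i) : Set (Perm V13)) := by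
  intro g hg
  refine mem_normalizer_fintype fun n hn ↦ ?_
  rw [SetLike.mem_coe, mem_zpowers_fourCycle_iff] at hn ⊢
  rw [mem_G13_iff] at hg
  revert i g n
  decide

theorem regular_normalized_iff {N : Subgroup (Perm V13)} :
    (IsRegularSubgroup N ∧ G13 ≤ normalizer (N : Set (Perm V13))) ↔
      N ∈ insert G13 (Set.range fun i ↦ zpowers (fourCycle i)) := by
  refine ⟨fun h ↦ isRegularSubgroup_iff.1 h.1, fun h ↦ ⟨isRegularSubgroup_iff.2 h, ?_⟩⟩
  rcases h with rfl | ⟨i, rfl⟩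
  exacts [le_normalizer, le_normalizer_zpowers_fourCycle i]

theorem not_isCyclic_V13 : ¬IsCyclic V13 :=
  not_isCyclic_of_forall_sq_eq_one (by decide) (by rw [Nat.card_eq_fintype_card]; decide)

theorem nonempty_mulEquiv_G13 : Nonempty (G13 ≃* V13) :=
  ⟨(MonoidHom.ofInjective (f := MulAction.toPermHom V13 V13) MulAction.toPerm_injective).symm⟩

theorem not_isCyclic_G13 : ¬IsCyclic G13 := fun h ↦
  not_isCyclic_V13 (nonempty_mulEquiv_G13.some.isCyclic.1 h)

theorem G13_notMem_range_zpowers_fourCycle :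
    G13 ∉ Set.range fun i ↦ zpowers (fourCycle i) := by
  rintro ⟨i, hi⟩
  exact not_isCyclic_G13 (hi ▸ inferInstance)

theorem regular_normalized_cyclic_iff {N : Subgroup (Perm V13)} :
    (IsRegularSubgroup N ∧ G13 ≤ normalizer (N : Set (Perm V13)) ∧
      IsCyclic N ∧ Nat.card N = 4) ↔ N ∈ Set.range fun i ↦ zpowers (fourCycle i) := by
  rw [← and_assoc, regular_normalized_iff]
  constructor
  · rintro ⟨hN | hN, hcyc, -⟩
    · exact absurd (hN ▸ hcyc) not_isCyclic_G13
    · exact hN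
  · rintro ⟨i, rfl⟩
    exact ⟨Set.mem_insert_of_mem _ ⟨i, rfl⟩, inferInstance, by
      rw [Nat.card_zpowers, orderOf_fourCycle]⟩

theorem regular_normalized_mulEquiv_iff {N : Subgroup (Perm V13)} :
    (IsRegularSubgroup N ∧ G13 ≤ normalizer (N : Set (Perm V13)) ∧ Nonempty (N ≃* V13)) ↔
      N = G13 := by
  rw [← and_assoc, regular_normalized_iff]
  constructor
  · rintro ⟨hN | ⟨i, rfl⟩, ⟨e⟩⟩
    · exact hN
    · exact absurd (e.isCyclic.1 inferInstance) not_isCyclic_V13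
  · rintro rfl
    exact ⟨Set.mem_insert _ _, nonempty_mulEquiv_G13⟩

end KleinFour

open KleinFour in
/-- There are exactly 4 regular subgroups of `Sym(V)`, `V = C₂ × C₂`, normalized
by the image `G` of the left regular representation of `V`: exactly 3 cyclic of
order 4 and exactly one isomorphic to `V` (namely `G` itself). -/
theorem stmt_13 :
    Nat.card {N : Subgroup (Equiv.Perm V13) //
        IsRegularSubgroup N ∧ G13 ≤ Subgroup.normalizer (N : Set (Equiv.Perm V13))} = 4 ∧
    Nat.card {N : Subgroup (Equiv.Perm V13) //
        IsRegularSubgroup N ∧ G13 ≤ Subgroup.normalizer (N : Set (Equiv.Perm V13)) ∧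
        IsCyclic ↥N ∧ Nat.card ↥N = 4} = 3 ∧
    Nat.card {N : Subgroup (Equiv.Perm V13) //
        IsRegularSubgroup N ∧ G13 ≤ Subgroup.normalizer (N : Set (Equiv.Perm V13)) ∧
        Nonempty (↥N ≃* V13)} = 1 ∧
    (∀ N : Subgroup (Equiv.Perm V13),
        IsRegularSubgroup N → G13 ≤ Subgroup.normalizer (N : Set (Equiv.Perm V13)) →
        Nonempty (↥N ≃* V13) → N = G13) := by
  refine ⟨?_, ?_, ?_, fun N hN hnorm he ↦ regular_normalized_mulEquiv_iff.1 ⟨hN, hnorm, he⟩⟩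
  · rw [Nat.card_subtype_eq_ncard fun _ ↦ regular_normalized_iff,
      Set.ncard_insert_of_notMem G13_notMem_range_zpowers_fourCycle,
      Set.ncard_range_of_injective zpowers_fourCycle_injective, Nat.card_fin]
  · rw [Nat.card_subtype_eq_ncard fun _ ↦ regular_normalized_cyclic_iff,
      Set.ncard_range_of_injective zpowers_fourCycle_injective, Nat.card_fin]
  · rw [Nat.card_subtype_eq_ncard (s := {G13}) fun _ ↦ regular_normalized_mulEquiv_iff,
      Set.ncard_singleton]
end

section
/- Let G ≤ Sym(S₃) be the image of the left regular representation of the symmetric group S₃, and let N₁, N₂ be any two regular subgroups of Sym(S₃) that are cyclic of order 6 and normalized by G. Then N₁ and N₂ are G-isomorphic: there exists a group isomorphism φ: N₁ → N₂ such that φ(g n g⁻¹) = g φ(n) g⁻¹ for all g ∈ G and all n ∈ N₁. (This is the smallest-degree instance of non-equal Hopf Galois structures with isomorphic underlying Hopf algebras: on a Galois extension of degree 6 with group S₃, the three Hopf Galois structures of cyclic type C₆ have pairwise isomorphic Hopf algebras.) -/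
/-- The symmetric group `S₃`. -/
abbrev S3 := Equiv.Perm (Fin 3)

/-- The image of the left regular representation of `S₃` in `Sym(S₃)`. -/
def G15 : Subgroup (Equiv.Perm S3) := (MulAction.toPermHom S3 S3).range

open Subgroup MulAction Equiv.Perm

section Conjugation

variable {G : Type*} [Group G] {g σ : G} {m : ℤ}

theorem exists_conj_eq_zpow_of_conj_mem_zpowers (h : g * σ * g⁻¹ ∈ zpowers σ) :
    ∃ m : ℤ, ∀ n ∈ zpowers σ, g * n * g⁻¹ = n ^ m := by
  obtain ⟨m, hm⟩ := mem_zpowers_iff.mp h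
  refine ⟨m, ?_⟩
  rintro _ ⟨j, rfl⟩
  simp only [← conj_zpow, ← hm, ← zpow_mul, mul_comm m j]

theorem conj_pow_eq_zpow_pow (h : ∀ n ∈ zpowers σ, g * n * g⁻¹ = n ^ m) (k : ℕ) :
    g ^ k * σ * (g ^ k)⁻¹ = σ ^ m ^ k := by
  induction k with
  | zero => simp
  | succ k ih =>
    rw [pow_succ', mul_inv_rev, show g * g ^ k * σ * ((g ^ k)⁻¹ * g⁻¹)
      = g * (g ^ k * σ * (g ^ k)⁻¹) * g⁻¹ by group, ih,
      h _ (zpow_mem (mem_zpowers σ) _), ← zpow_mul, pow_succ]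

theorem pow_modEq_one_of_conj_eq_zpow (h : ∀ n ∈ zpowers σ, g * n * g⁻¹ = n ^ m)
    {k : ℕ} (hk : g ^ k = 1) : m ^ k ≡ 1 [ZMOD orderOf σ] := by
  rw [← zpow_eq_zpow_iff_modEq, ← conj_pow_eq_zpow_pow h, hk]
  simp

theorem conj_eq_zpow_of_modEq (h : ∀ n ∈ zpowers σ, g * n * g⁻¹ = n ^ m) {a : ℤ}
    (ha : m ≡ a [ZMOD orderOf σ]) : ∀ n ∈ zpowers σ, g * n * g⁻¹ = n ^ a := by
  intro n hn
  obtain ⟨j, rfl⟩ := mem_zpowers_iff.mp hn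
  rw [h _ hn, ← zpow_mul, mul_comm, zpow_mul, zpow_eq_zpow_iff_modEq.mpr ha, ← zpow_mul,
    mul_comm, zpow_mul]

theorem exists_zmod_pow_eq_one_and_conj_eq_zpow {q k : ℕ} (hσ : orderOf σ = q)
    (h : g * σ * g⁻¹ ∈ zpowers σ) (hk : g ^ k = 1) :
    ∃ m : ZMod q, m ^ k = 1 ∧
      ∀ a : ℤ, (a : ZMod q) = m → ∀ n ∈ zpowers σ, g * n * g⁻¹ = n ^ a := by
  subst hσ
  obtain ⟨m, hm⟩ := exists_conj_eq_zpow_of_conj_mem_zpowers h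
  refine ⟨m, ?_, fun a ha ↦ conj_eq_zpow_of_modEq hm ?_⟩
  · exact_mod_cast (ZMod.intCast_eq_intCast_iff _ _ _).mpr (pow_modEq_one_of_conj_eq_zpow hm hk)
  · exact (ZMod.intCast_eq_intCast_iff _ _ _).mp ha.symm

end Conjugation

theorem eq_toPerm_op_of_forall_commute {H : Type*} [Group H] {σ : Equiv.Perm H}
    (h : ∀ t : H, Commute (toPerm t) σ) : σ = toPerm (MulOpposite.op (σ 1)) := by
  ext x
  simpa using (Equiv.congr_fun (h x) 1).symm

local notation "λₗ" => MulAction.toPermHom S3 S3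

theorem orderOf_ne_six (u : S3) : orderOf u ≠ 6 := fun hu ↦ by
  have : IsCyclic S3 := isCyclic_of_orderOf_eq_card u (by simp [hu]; rfl)
  have := isCyclic_iff_card_le_two.mp this
  simp at this

theorem exists_not_commute_toPermHom_of_orderOf_eq_six {σ : Equiv.Perm S3} (hσ : orderOf σ = 6) :
    ∃ t : S3, ¬ Commute (λₗ t) σ := by
  by_contra! h
  have hop : orderOf (MulOpposite.op (σ 1)) = orderOf (σ 1) :=
    orderOf_eq_orderOf_iff.mpr fun n ↦ by rw [← MulOpposite.op_pow, MulOpposite.op_eq_one_iff]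
  apply orderOf_ne_six (σ 1)
  rw [← hop, ← orderOf_injective (toPermHom _ S3) toPerm_injective, toPermHom_apply,
    ← eq_toPerm_op_of_forall_commute h, hσ]

theorem conj_toPermHom_eq_self_of_sign_eq_one {σ : Equiv.Perm S3} {t : S3}
    (hσ : orderOf σ = 6) (hnorm : λₗ t * σ * (λₗ t)⁻¹ ∈ zpowers σ)
    (ht : sign t = 1) :
    ∀ n ∈ zpowers σ, λₗ t * n * (λₗ t)⁻¹ = n := by
  have ht3 : λₗ t ^ 3 = 1 := by
    rw [← map_pow, (by decide : ∀ t : S3, sign t = 1 → t ^ 3 = 1) t ht, map_one]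
  obtain ⟨m, hm3, hm⟩ := exists_zmod_pow_eq_one_and_conj_eq_zpow hσ hnorm ht3
  have hm1 : m = 1 := (by decide : ∀ m : ZMod 6, m ^ 3 = 1 → m = 1) m hm3
  simpa using hm 1 (by simp [hm1])

theorem conj_toPermHom_eq_self_or_inv_of_sign_eq_neg_one {σ : Equiv.Perm S3} {t : S3}
    (hσ : orderOf σ = 6) (hnorm : λₗ t * σ * (λₗ t)⁻¹ ∈ zpowers σ)
    (ht : sign t = -1) :
    (∀ n ∈ zpowers σ, λₗ t * n * (λₗ t)⁻¹ = n) ∨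
      ∀ n ∈ zpowers σ, λₗ t * n * (λₗ t)⁻¹ = n⁻¹ := by
  have ht2 : λₗ t ^ 2 = 1 := by
    rw [← map_pow, (by decide : ∀ t : S3, sign t = -1 → t ^ 2 = 1) t ht, map_one]
  obtain ⟨m, hm2, hm⟩ := exists_zmod_pow_eq_one_and_conj_eq_zpow hσ hnorm ht2
  rcases (by decide : ∀ m : ZMod 6, m ^ 2 = 1 → m = 1 ∨ m = -1) m hm2 with rfl | rfl
  · exact .inl (by simpa using hm 1 (by simp))
  · exact .inr (by simpa using hm (-1) (by simp))

theorem conj_toPermHom_eq_zpow_sign {σ : Equiv.Perm S3} (hσ : orderOf σ = 6)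
    (hnorm : ∀ s : S3, λₗ s * σ * (λₗ s)⁻¹ ∈ zpowers σ) (s : S3) :
    ∀ n ∈ zpowers σ, λₗ s * n * (λₗ s)⁻¹ = n ^ (sign s : ℤ) := by
  have hcomm {t : S3} (ht : sign t = 1) : Commute (λₗ t) σ := mul_inv_eq_iff_eq_mul.mp
    (conj_toPermHom_eq_self_of_sign_eq_one hσ (hnorm t) ht σ (mem_zpowers σ))
  rcases Int.units_eq_one_or (sign s) with hs | hs
  · simpa [hs] using conj_toPermHom_eq_self_of_sign_eq_one hσ (hnorm s) hs
  rcases conj_toPermHom_eq_self_or_inv_of_sign_eq_neg_one hσ (hnorm s) hs with hfix | hinv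
  · obtain ⟨t, ht⟩ := exists_not_commute_toPermHom_of_orderOf_eq_six hσ
    refine (ht ?_).elim
    have hs' : Commute (λₗ s) σ := mul_inv_eq_iff_eq_mul.mp (hfix σ (mem_zpowers σ))
    rcases Int.units_eq_one_or (sign t) with ht' | ht'
    · exact hcomm ht'
    · have := hs'.mul_left (hcomm (t := s⁻¹ * t) (by simp [hs, ht']))
      rwa [← map_mul, mul_inv_cancel_left] at this
  · simpa [hs] using hinv

theorem conj_toPermHom_eq_zpow_sign_of_isCyclic {N : Subgroup (Equiv.Perm S3)} (hc : IsCyclic N)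
    (ho : Nat.card N = 6) (hn : G15 ≤ normalizer (N : Set (Equiv.Perm S3))) (s : S3) :
    ∀ n ∈ N, λₗ s * n * (λₗ s)⁻¹ = n ^ (sign s : ℤ) := by
  obtain ⟨σ, rfl⟩ := (Subgroup.isCyclic_iff_exists_zpowers_eq_top N).mp hc
  refine conj_toPermHom_eq_zpow_sign (Nat.card_zpowers σ ▸ ho) (fun t ↦ ?_) s
  exact (mem_normalizer_iff.mp (hn ⟨t, rfl⟩) σ).mp (mem_zpowers σ)

theorem stmt_15_general (N₁ N₂ : Subgroup (Equiv.Perm S3))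
    (c₁ : IsCyclic ↥N₁) (o₁ : Nat.card ↥N₁ = 6)
    (c₂ : IsCyclic ↥N₂) (o₂ : Nat.card ↥N₂ = 6)
    (n₁ : G15 ≤ Subgroup.normalizer (N₁ : Set (Equiv.Perm S3))) (n₂ : G15 ≤ Subgroup.normalizer (N₂ : Set (Equiv.Perm S3))) :
    ∃ φ : ↥N₁ ≃* ↥N₂, ∀ g ∈ G15, ∀ (n : ↥N₁) (hgn : g * ↑n * g⁻¹ ∈ N₁),
      (↑(φ ⟨g * ↑n * g⁻¹, hgn⟩) : Equiv.Perm S3) = g * ↑(φ n) * g⁻¹ := by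
  refine ⟨mulEquivOfCyclicCardEq (o₁.trans o₂.symm), ?_⟩
  rintro _ ⟨s, rfl⟩ n hgn
  have hconj : (⟨_, hgn⟩ : N₁) = n ^ (sign s : ℤ) :=
    Subtype.ext (conj_toPermHom_eq_zpow_sign_of_isCyclic c₁ o₁ n₁ s n n.2)
  rw [hconj, map_zpow, Subgroup.coe_zpow,
    conj_toPermHom_eq_zpow_sign_of_isCyclic c₂ o₂ n₂ s _ (SetLike.coe_mem _)]

/-- Any two regular subgroups of `Sym(S₃)` which are cyclic of order 6 and
normalized by the image `G` of the left regular representation of `S₃` are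
`G`-isomorphic: there is a group isomorphism `φ : N₁ → N₂` with
`φ(g n g⁻¹) = g φ(n) g⁻¹` for all `g ∈ G`, `n ∈ N₁`. -/
theorem stmt_15 (N₁ N₂ : Subgroup (Equiv.Perm S3))
    (h₁ : IsRegularSubgroup N₁) (h₂ : IsRegularSubgroup N₂)
    (c₁ : IsCyclic ↥N₁) (o₁ : Nat.card ↥N₁ = 6)
    (c₂ : IsCyclic ↥N₂) (o₂ : Nat.card ↥N₂ = 6)
    (n₁ : G15 ≤ Subgroup.normalizer (N₁ : Set (Equiv.Perm S3))) (n₂ : G15 ≤ Subgroup.normalizer (N₂ : Set (Equiv.Perm S3))) :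
    ∃ φ : ↥N₁ ≃* ↥N₂, ∀ g ∈ G15, ∀ (n : ↥N₁) (hgn : g * ↑n * g⁻¹ ∈ N₁),
      (↑(φ ⟨g * ↑n * g⁻¹, hgn⟩) : Equiv.Perm S3) = g * ↑(φ n) * g⁻¹ :=
  stmt_15_general N₁ N₂ c₁ o₁ c₂ o₂ n₁ n₂
end
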